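/- arXiv:2208.01119 — 2 statements merged into one kernel-verified Lean document; each statement's English description precedes it below -/
import Mathlib

section
/- Let G be a finite directed graph with distinct vertices u, v such that E u v and E v u both hold, neither has a self-loop, and for every vertex w ∉ {u, v}: E w u ↔ E w v and E u w ↔ E v w. Then every directed feedback vertex set of G contains u or v, and if S is a directed feedback vertex set with v ∈ S and u ∉ S, then (S \ {v}) ∪ {u} is also a directed feedback vertex set. Consequently there exists a minimum directed feedback vertex set of G containing u. -/
/-- The index following `i` cyclically in the list `l`. -/
def cycNext (l : List V) (i : Fin l.length) : Fin l.length :=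
  ⟨(i.val + 1) % l.length, Nat.mod_lt _ i.pos⟩

/-- `l` is a directed cycle of the digraph with edge relation `E`: a nonempty list of
pairwise distinct vertices with an edge from each vertex to the cyclically next one. -/
def IsDicycle (E : V → V → Prop) (l : List V) : Prop :=
  l ≠ [] ∧ l.Nodup ∧ ∀ i : Fin l.length, E (l.get i) (l.get (cycNext l i))

/-- `(u, w)` is a chord of the cycle `l`: an edge between vertices of `l`
that is not one of the cycle's edges. -/
def IsChord (E : V → V → Prop) (l : List V) (u w : V) : Prop :=
  u ∈ l ∧ w ∈ l ∧ E u w ∧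
    ∀ i : Fin l.length, ¬(l.get i = u ∧ l.get (cycNext l i) = w)

/-- `l` is a chordless directed cycle. -/
def IsChordlessDicycle (E : V → V → Prop) (l : List V) : Prop :=
  IsDicycle E l ∧ ∀ u w, ¬ IsChord E l u w

/-- `S` is a directed feedback vertex set: the subgraph induced on the complement
of `S` contains no directed cycle. -/
def IsDFVS (E : V → V → Prop) (S : Set V) : Prop :=
  ¬ ∃ l : List V, IsDicycle (fun a b => E a b ∧ a ∉ S ∧ b ∉ S) l


/-! Since `u → v → u` is a 2-cycle, every feedback vertex set meets `{u, v}`. If `u ∉ S`, map a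
cycle avoiding `(S \ {v}) ∪ {u}` by the transposition of `u` and `v`: the cycle misses `u`, so
this just renames `v` to `u`, which keeps every edge by the twin condition (and by `¬ E v v` for
the one-vertex cycle `[v]`), and produces a cycle avoiding `S`. Hence trading `v` for `u` in a
minimum feedback vertex set leaves it minimum. -/

open Finset

section Dicycle

variable {V W : Type*}

theorem IsDicycle.map {E : V → V → Prop} {E' : W → W → Prop} {l : List V} (hl : IsDicycle E l)
    {f : V → W} (hf : ∀ x ∈ l, ∀ y ∈ l, f x = f y → x = y)
    (hE : ∀ a ∈ l, ∀ b ∈ l, E a b → E' (f a) (f b)) : IsDicycle E' (l.map f) := by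
  obtain ⟨hne, hnd, hedge⟩ := hl
  refine ⟨by simpa using hne, hnd.map_on hf, fun i => ?_⟩
  have hi : i.val < l.length := by simpa using i.isLt
  have hnext : (cycNext (l.map f) i).val = (cycNext l ⟨i.val, hi⟩).val := by simp [cycNext]
  simpa [hnext] using hE _ (l.get_mem _) _ (l.get_mem _) (hedge ⟨i.val, hi⟩)

theorem isDicycle_pair {E : V → V → Prop} {u v : V} (huv : u ≠ v) (h1 : E u v) (h2 : E v u) :
    IsDicycle E [u, v] := by
  refine ⟨List.cons_ne_nil _ _, by simp [huv], fun i => ?_⟩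
  fin_cases i <;> simpa [cycNext]

theorem IsDicycle.notMem_of_induced {E : V → V → Prop} {S : Set V} {l : List V}
    (hl : IsDicycle (fun a b => E a b ∧ a ∉ S ∧ b ∉ S) l) {x : V} (hx : x ∈ l) : x ∉ S := by
  obtain ⟨i, rfl⟩ := List.mem_iff_get.mp hx
  exact (hl.2.2 i).2.1

end Dicycle

section DFVS

variable {V : Type*} {E : V → V → Prop}

theorem isDFVS_univ : IsDFVS E Set.univ :=
  fun ⟨_, hl⟩ => hl.notMem_of_induced (List.getElem_mem (List.length_pos_iff.mpr hl.1))
    (Set.mem_univ _)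

theorem exists_isDFVS_forall_card_le [Fintype V] (E : V → V → Prop) :
    ∃ S : Finset V, IsDFVS E ↑S ∧ ∀ T : Finset V, IsDFVS E ↑T → #S ≤ #T := by
  classical
  obtain ⟨S, hS, hmin⟩ := exists_min_image ({S : Finset V | IsDFVS E ↑S} : Finset _) card
    ⟨univ, by simpa using isDFVS_univ⟩
  exact ⟨S, by simpa using hS, fun T hT => hmin T (by simpa using hT)⟩

theorem IsDFVS.mem_or_mem {S : Set V} (hS : IsDFVS E S) {u v : V} (huv : u ≠ v)
    (h1 : E u v) (h2 : E v u) : u ∈ S ∨ v ∈ S := by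
  by_contra! h
  exact hS ⟨[u, v], isDicycle_pair huv ⟨h1, h.1, h.2⟩ ⟨h2, h.2, h.1⟩⟩

theorem edge_swap_of_twin [DecidableEq V] {u v : V} (hv : ¬ E v v)
    (htwin : ∀ w, w ≠ u → w ≠ v → ((E w u ↔ E w v) ∧ (E u w ↔ E v w)))
    {a b : V} (ha : a ≠ u) (hb : b ≠ u) (hab : E a b) :
    E (Equiv.swap v u a) (Equiv.swap v u b) := by
  by_cases hav : a = v <;> by_cases hbv : b = v
  · subst hav hbv
    exact absurd hab hv
  · subst hav
    simpa [Equiv.swap_apply_of_ne_of_ne hbv hb] using (htwin b hb hbv).2.mpr hab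
  · subst hbv
    simpa [Equiv.swap_apply_of_ne_of_ne hav ha] using (htwin a ha hav).1.mpr hab
  · simpa [Equiv.swap_apply_of_ne_of_ne hav ha, Equiv.swap_apply_of_ne_of_ne hbv hb] using hab

theorem IsDFVS.diff_union_singleton {S : Set V} (hS : IsDFVS E S) {u v : V}
    (huS : u ∉ S) (hv : ¬ E v v)
    (htwin : ∀ w, w ≠ u → w ≠ v → ((E w u ↔ E w v) ∧ (E u w ↔ E v w))) :
    IsDFVS E ((S \ {v}) ∪ {u}) := by
  classical
  rintro ⟨l, hl⟩
  have hout : ∀ x ∈ l, x ≠ u ∧ (x ∈ S → x = v) := fun x hx => by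
    simpa [or_comm, not_or] using hl.notMem_of_induced hx
  have hswap : ∀ x ∈ l, Equiv.swap v u x ∉ S := fun x hx => by
    by_cases hxv : x = v
    · simpa [hxv] using huS
    · simpa [Equiv.swap_apply_of_ne_of_ne hxv (hout x hx).1] using mt (hout x hx).2 hxv
  refine hS ⟨_, hl.map (fun x _ y _ h => (Equiv.swap v u).injective h)
    fun a ha b hb hab => ⟨?_, hswap a ha, hswap b hb⟩⟩
  exact edge_swap_of_twin hv htwin (hout a ha).1 (hout b hb).1 hab.1

end DFVS

theorem pairwise_exclusion_reduction_general {V : Type*} [Fintype V] (E : V → V → Prop)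
    (u v : V) (huv : u ≠ v) (h1 : E u v) (h2 : E v u)
    (hv : ¬ E v v)
    (htwin : ∀ w, w ≠ u → w ≠ v → ((E w u ↔ E w v) ∧ (E u w ↔ E v w))) :
    (∀ S : Set V, IsDFVS E S → u ∈ S ∨ v ∈ S) ∧
    (∀ S : Set V, IsDFVS E S → v ∈ S → u ∉ S → IsDFVS E ((S \ {v}) ∪ {u})) ∧
    ∃ S : Finset V, IsDFVS E ↑S ∧ u ∈ S ∧
      ∀ T : Finset V, IsDFVS E ↑T → S.card ≤ T.card := by
  classical
  refine ⟨fun S hS => hS.mem_or_mem huv h1 h2,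
    fun S hS _ huS => hS.diff_union_singleton huS hv htwin, ?_⟩
  obtain ⟨S, hS, hmin⟩ := exists_isDFVS_forall_card_le E
  by_cases huS : u ∈ S
  · exact ⟨S, hS, huS, hmin⟩
  have hvS : v ∈ S := (hS.mem_or_mem huv h1 h2).resolve_left huS
  refine ⟨insert u (S.erase v), ?_, mem_insert_self _ _, fun T hT => ?_⟩
  · simpa [Set.union_singleton] using hS.diff_union_singleton (by simpa using huS) hv htwin
  · calc #(insert u (S.erase v)) ≤ #(S.erase v) + 1 := card_insert_le _ _
      _ = #S := card_erase_add_one hvS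
      _ ≤ #T := hmin T hT

theorem pairwise_exclusion_reduction {V : Type*} [Fintype V] (E : V → V → Prop)
    (u v : V) (huv : u ≠ v) (h1 : E u v) (h2 : E v u)
    (hu : ¬ E u u) (hv : ¬ E v v)
    (htwin : ∀ w, w ≠ u → w ≠ v → ((E w u ↔ E w v) ∧ (E u w ↔ E v w))) :
    (∀ S : Set V, IsDFVS E S → u ∈ S ∨ v ∈ S) ∧
    (∀ S : Set V, IsDFVS E S → v ∈ S → u ∉ S → IsDFVS E ((S \ {v}) ∪ {u})) ∧
    ∃ S : Finset V, IsDFVS E ↑S ∧ u ∈ S ∧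
      ∀ T : Finset V, IsDFVS E ↑T → S.card ≤ T.card :=
  pairwise_exclusion_reduction_general E u v huv h1 h2 hv htwin
end

section
/- Let G be a strongly connected finite directed graph on at least two vertices, and let v be a vertex such that every vertex other than v has exactly one in-neighbor. Then every directed cycle of G passes through v. -/
theorem cycNext_surjective {V : Type*} (l : List V) : Function.Surjective (cycNext l) := by
  intro j
  have hpos : 0 < l.length := j.pos
  refine ⟨⟨(j.val + l.length - 1) % l.length, Nat.mod_lt _ hpos⟩, Fin.ext ?_⟩
  change ((j.val + l.length - 1) % l.length + 1) % l.length = j.val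
  rw [Nat.mod_add_mod, Nat.sub_add_cancel (by omega), Nat.add_mod_right, Nat.mod_eq_of_lt j.isLt]

theorem IsDicycle.exists_mem_rel_of_mem {V : Type*} {E : V → V → Prop} {l : List V}
    (hl : IsDicycle E l) {y : V} (hy : y ∈ l) : ∃ x ∈ l, E x y := by
  obtain ⟨j, rfl⟩ := List.get_of_mem hy
  obtain ⟨i, rfl⟩ := cycNext_surjective l j
  exact ⟨l.get i, List.get_mem _ _, hl.2.2 i⟩

/-- Following the unique in-neighbors backwards from a vertex of `S` never leaves `S`, so it
never reaches `v`; read forwards, no walk from `v` enters `S`. -/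
theorem not_mem_of_reflTransGen_of_unique_pred {V : Type*} {E : V → V → Prop} {v : V}
    {S : Set V} (hdeg : ∀ w, w ≠ v → ∃! x, E x w) (hS : ∀ y ∈ S, ∃ x ∈ S, E x y)
    (hv : v ∉ S) {y : V} (hvy : Relation.ReflTransGen E v y) : y ∉ S := by
  induction hvy with
  | refl => exact hv
  | @tail x y _ hxy ih =>
    intro hyS
    obtain ⟨p, hpS, hpy⟩ := hS y hyS
    have hyv : y ≠ v := fun h => hv (h ▸ hyS)
    obtain ⟨_, -, huniq⟩ := hdeg y hyv
    exact ih ((huniq p hpy).trans (huniq x hxy).symm ▸ hpS)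

theorem all_cycles_through_high_in_degree_vertex_general {V : Type*}
    (E : V → V → Prop) (v : V)
    (hsc : ∀ x y : V, Relation.ReflTransGen E x y)
    (hdeg : ∀ w, w ≠ v → ∃! x, E x w) :
    ∀ l : List V, IsDicycle E l → v ∈ l := by
  intro l hl
  by_contra hv
  obtain ⟨w, hw⟩ := List.exists_mem_of_ne_nil l hl.1
  exact not_mem_of_reflTransGen_of_unique_pred (S := {x | x ∈ l}) hdeg
    (fun _ hy => hl.exists_mem_rel_of_mem hy) hv (hsc v w) hw

theorem all_cycles_through_high_in_degree_vertex {V : Type*} [Fintype V]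
    (E : V → V → Prop) (v : V) (hcard : 2 ≤ Fintype.card V)
    (hsc : ∀ x y : V, Relation.ReflTransGen E x y)
    (hdeg : ∀ w, w ≠ v → ∃! x, E x w) :
    ∀ l : List V, IsDicycle E l → v ∈ l :=
  all_cycles_through_high_in_degree_vertex_general E v hsc hdeg
end
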